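/- arXiv:2304.03996 — 2 statements merged into one kernel-verified Lean document; each statement's English description precedes it below -/
import Mathlib

section
/- Let γ ∈ (0, 1/2), β > 0, m ≥ 2, and let T be an odd integer with T ≥ 2·log₂(m)/γ². Suppose μ̃ is a Borel probability measure on {0,1}^X such that for every distribution D over labeled examples that is realizable by H, μ̃({ h : L_D(h) ≤ 1/2 − γ }) ≥ β. Then for every dataset S of size m realizable by H, the probability, over T hypotheses h_1,…,h_T drawn i.i.d. from μ̃, that the majority vote MAJ(h_1,…,h_T) is consistent with S is at least β^T. -/
open MeasureTheory
open scoped ENNReal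

namespace ContradictionGraph

variable {X : Type*}

/-- A hypothesis `h : X → Bool` is consistent with the dataset `S` of size `m` if it labels
every example in `S` correctly. -/
def Consistent (h : X → Bool) {m : ℕ} (S : Fin m → X × Bool) : Prop :=
  ∀ i, h (S i).1 = (S i).2

/-- A dataset `S` is realizable by the concept class `H` if some hypothesis in `H` is
consistent with it. -/
def Realizable (H : Set (X → Bool)) {m : ℕ} (S : Fin m → X × Bool) : Prop :=
  ∃ h ∈ H, Consistent h S

/-- Two datasets contradict each other if there is a point `x` such that one of them contains
the labeled example `(x, 0)` and the other contains `(x, 1)`. -/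
def Contradicts {m : ℕ} (S S' : Fin m → X × Bool) : Prop :=
  ∃ x : X, ((∃ i, S i = (x, false)) ∧ (∃ j, S' j = (x, true))) ∨
    ((∃ i, S i = (x, true)) ∧ (∃ j, S' j = (x, false)))

/-- The vertex set of the contradiction graph `G_m(H)`: all `H`-realizable datasets of
size `m`. -/
abbrev Vm (H : Set (X → Bool)) (m : ℕ) : Type _ :=
  {S : Fin m → X × Bool // Realizable H S}

/-- A clique in the contradiction graph `G_m(H)`: a set of vertices every two distinct members
of which contradict each other. -/
def IsClique (H : Set (X → Bool)) (m : ℕ) (C : Set (Vm H m)) : Prop :=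
  ∀ S ∈ C, ∀ S' ∈ C, S ≠ S' → Contradicts S.1 S'.1

/-- An independent set in the contradiction graph `G_m(H)`: a set of vertices no two of which
are adjacent (i.e. no two distinct members contradict each other). -/
def IsIndep (H : Set (X → Bool)) (m : ℕ) (I : Set (Vm H m)) : Prop :=
  ∀ S ∈ I, ∀ S' ∈ I, S ≠ S' → ¬ Contradicts S.1 S'.1

/-- The clique number `ω_m` of `G_m(H)`: the supremum of the sizes of cliques (in `ℕ∞`). -/
noncomputable def cliqueNum (H : Set (X → Bool)) (m : ℕ) : ℕ∞ :=
  ⨆ (C : Set (Vm H m)) (_ : IsClique H m C), C.encard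

/-- The clique dimension `CD(H) = sup { m : ω_m = 2^m } ∈ ℕ ∪ {∞}`. -/
noncomputable def cliqueDim (H : Set (X → Bool)) : ℕ∞ :=
  ⨆ (m : ℕ) (_ : cliqueNum H m = 2 ^ m), (m : ℕ∞)

/-- A fractional clique of `G_m(H)`: a nonnegative weight function on the vertices such that
the total weight of every independent set is at most `1`. -/
def IsFracClique (H : Set (X → Bool)) (m : ℕ) (δ : Vm H m → ℝ≥0∞) : Prop :=
  ∀ I : Set (Vm H m), IsIndep H m I → ∑' S : I, δ S.1 ≤ 1

/-- The fractional clique number `ω*_m` of `G_m(H)`: the supremum of the sizes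
`|δ| = Σ_S δ(S)` of fractional cliques. -/
noncomputable def fracCliqueNum (H : Set (X → Bool)) (m : ℕ) : ℝ≥0∞ :=
  ⨆ (δ : Vm H m → ℝ≥0∞) (_ : IsFracClique H m δ), ∑' S, δ S

/-- The fractional clique dimension `CD*(H) = sup { m : ω*_m = 2^m } ∈ ℕ ∪ {∞}`. -/
noncomputable def fracCliqueDim (H : Set (X → Bool)) : ℕ∞ :=
  ⨆ (m : ℕ) (_ : fracCliqueNum H m = 2 ^ m), (m : ℕ∞)

end ContradictionGraph

namespace ContradictionGraph
variable {X : Type*} [MeasurableSpace X]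

/-- The population loss `L_D(h) = Pr_{(x,y) ∼ D} [h(x) ≠ y]`. -/
noncomputable def popLoss (D : Measure (X × Bool)) (h : X → Bool) : ℝ≥0∞ :=
  D {p | h p.1 ≠ p.2}

/-- A distribution over labeled examples is realizable by `H` if `inf_{h ∈ H} L_D(h) = 0`. -/
def RealizableDist (H : Set (X → Bool)) (D : Measure (X × Bool)) : Prop :=
  (⨅ h ∈ H, popLoss D h) = 0

/-- `A` is an `(m, α, β)`-learner for `H`: for every realizable distribution `D`, the
probability over `S ∼ D^m` and `h ∼ A(S)` that `L_D(h) > α` is less than `β`. -/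
def IsLearner (H : Set (X → Bool)) (m : ℕ) (A : (Fin m → X × Bool) → Measure (X → Bool))
    (α β : ℝ) : Prop :=
  ∀ D : Measure (X × Bool), IsProbabilityMeasure D → RealizableDist H D →
    (∫⁻ S, A S {h | ENNReal.ofReal α < popLoss D h} ∂(Measure.pi fun _ : Fin m => D))
      < ENNReal.ofReal β

/-- Two datasets of size `m` are neighboring if they differ in at most a single example. -/
def Neighboring {m : ℕ} (S S' : Fin m → X × Bool) : Prop :=
  ∃ i : Fin m, ∀ j, j ≠ i → S j = S' j

/-- `A` is `(ε, δ)`-differentially private: for all neighboring input datasets and every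
(Borel) event `E`, `Pr[A(S) ∈ E] ≤ e^ε · Pr[A(S') ∈ E] + δ`. -/
def IsDP {m : ℕ} (A : (Fin m → X × Bool) → Measure (X → Bool)) (ε δ : ℝ) : Prop :=
  ∀ S S' : Fin m → X × Bool, Neighboring S S' → ∀ E : Set (X → Bool), MeasurableSet E →
    A S E ≤ ENNReal.ofReal (Real.exp ε) * A S' E + ENNReal.ofReal δ

/-- `H` is approximately differentially privately PAC learnable. -/
def ApproxDPLearnable (H : Set (X → Bool)) : Prop :=
  ∃ ε₀ : ℝ, 0 < ε₀ ∧ ∃ α β δ : ℕ → ℝ,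
    Filter.Tendsto α Filter.atTop (nhds 0) ∧
    Filter.Tendsto β Filter.atTop (nhds 0) ∧
    (∀ m, 0 ≤ δ m) ∧
    (∀ c : ℝ, 0 < c → Filter.Tendsto (fun m : ℕ => (m : ℝ) ^ c * δ m) Filter.atTop (nhds 0)) ∧
    ∃ A : (m : ℕ) → (Fin m → X × Bool) → Measure (X → Bool),
      (∀ m S, IsProbabilityMeasure (A m S)) ∧
      (∀ m, IsDP (A m) ε₀ (δ m)) ∧
      (∀ m, IsLearner H m (A m) (α m) (β m))

/-- `H` is pure differentially privately PAC learnable. -/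
def PureDPLearnable (H : Set (X → Bool)) : Prop :=
  ∃ ε₀ : ℝ, 0 < ε₀ ∧ ∃ α β : ℕ → ℝ,
    Filter.Tendsto α Filter.atTop (nhds 0) ∧
    Filter.Tendsto β Filter.atTop (nhds 0) ∧
    ∃ A : (m : ℕ) → (Fin m → X × Bool) → Measure (X → Bool),
      (∀ m S, IsProbabilityMeasure (A m S)) ∧
      (∀ m, IsDP (A m) ε₀ 0) ∧
      (∀ m, IsLearner H m (A m) (α m) (β m))

end ContradictionGraph

namespace ContradictionGraph
variable {X : Type*}

/-- The majority vote of `T` hypotheses: `x ↦ 1` iff `|{t : h_t(x) = 1}| > T/2`. -/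
def Maj (T : ℕ) (h : Fin T → X → Bool) : X → Bool :=
  fun x => decide (T < 2 * (Finset.univ.filter fun t => h t x = true).card)

end ContradictionGraph

/-!
Multiplicative weights on the sample `S`. Give example `i` the weight `a ^ cᵢ`, where `cᵢ` counts
the hypotheses drawn so far that misclassify it and `a = (1 + 2γ) / (1 - 2γ)`, and call the next
hypothesis good if its weighted error is at most `1/2 - γ`. The weighted sample is a realizable
distribution, so by assumption the next hypothesis is good with probability at least `β` whatever
the earlier ones were; hence all `T` are good with probability at least `β ^ T`. Whether a
hypothesis is good depends on the earlier ones only through their error patterns in `{0,1}^m`,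
so the adaptive product bound can be taken on that finite space, where every set is measurable.

If all hypotheses are good, each round multiplies the total weight by at most
`1 + (a - 1)(1/2 - γ) = 1 + 2γ`, starting from `m`. An example misclassified by at least half of
them would alone weigh at least `a ^ (T/2)`, which forces `1 ≤ m² (1 - 4γ²) ^ T ≤ m² e^(-4γ²T)`,
contradicting the choice of `T`. So every example is misclassified by fewer than `T/2`
hypotheses, and the majority vote labels it correctly.
-/

theorem List.countP_ofFn {α : Type*} (f : α → Bool) :
    ∀ {n : ℕ} (p : Fin n → α),
      (List.ofFn p).countP f = (Finset.univ.filter fun t => f (p t)).card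
  | 0, _ => by simp
  | n + 1, p => by
    rw [List.ofFn_succ, List.countP_cons, List.countP_ofFn f, Finset.card_filter,
      Finset.card_filter, Fin.sum_univ_succ, add_comm]

/-- `AdaptivelyIn G L` says that every entry `L[t]` lies in `G (L.take t)`. -/
def AdaptivelyIn {P : Type*} (G : List P → Set P) : List P → Prop
  | [] => True
  | q :: L => q ∈ G [] ∧ AdaptivelyIn (fun M => G (q :: M)) L

theorem AdaptivelyIn.le_pow_mul {P : Type*} {G : List P → Set P} {Φ : List P → ℝ} {c : ℝ}
    (hc : 0 ≤ c) (hstep : ∀ M, ∀ q ∈ G M, Φ (M ++ [q]) ≤ c * Φ M) :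
    ∀ {L : List P}, AdaptivelyIn G L → Φ L ≤ c ^ L.length * Φ []
  | [], _ => by simp
  | q :: L, ⟨hq, hL⟩ => calc
    Φ (q :: L) ≤ c ^ L.length * Φ [q] :=
      AdaptivelyIn.le_pow_mul (Φ := fun M => Φ (q :: M)) hc (fun M => hstep (q :: M)) hL
    _ ≤ c ^ L.length * (c * Φ []) := by gcongr; exact hstep [] q hq
    _ = c ^ (q :: L).length * Φ [] := by rw [List.length_cons, pow_succ]; ring

theorem le_pi_setOf_adaptivelyIn {P : Type*} [MeasurableSpace P] [Countable P]
    [MeasurableSingletonClass P] (ν : Measure P) [SigmaFinite ν] {β : ℝ≥0∞} :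
    ∀ (T : ℕ) (G : List P → Set P), (∀ L, β ≤ ν (G L)) →
      β ^ T ≤ Measure.pi (fun _ : Fin T => ν) {p | AdaptivelyIn G (List.ofFn p)}
  | 0, G, _ => by simp [AdaptivelyIn]
  | T + 1, G, hG => by
    set B : Set (P × (Fin T → P)) :=
      {x | x.1 ∈ G [] ∧ AdaptivelyIn (fun M => G (x.1 :: M)) (List.ofFn x.2)}
    have hsplit : {p : Fin (T + 1) → P | AdaptivelyIn G (List.ofFn p)} =
        MeasurableEquiv.piFinSuccAbove (fun _ => P) 0 ⁻¹' B := by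
      ext p
      exact iff_of_eq (congrArg (AdaptivelyIn G) (List.ofFn_succ (f := p)))
    have hsection : ∀ q ∈ G [], β ^ T ≤ Measure.pi (fun _ : Fin T => ν) (Prod.mk q ⁻¹' B) :=
      fun q hq => by
        simpa [B, hq] using le_pi_setOf_adaptivelyIn ν T _ fun L => hG (q :: L)
    rw [hsplit, (measurePreserving_piFinSuccAbove (fun _ => ν) 0).measure_preimage
      MeasurableSet.of_discrete.nullMeasurableSet, Measure.prod_apply MeasurableSet.of_discrete]
    calc β ^ (T + 1) ≤ β ^ T * ν (G []) := by rw [pow_succ]; gcongr; exact hG []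
      _ = ∫⁻ q, (G []).indicator (fun _ => β ^ T) q ∂ν := by
        rw [lintegral_indicator_const MeasurableSet.of_discrete]
      _ ≤ _ := by
        refine lintegral_mono fun q => ?_
        by_cases hq : q ∈ G []
        · simpa [hq] using hsection q hq
        · simp [hq]

namespace ContradictionGraph

section

variable {X : Type*} {m : ℕ}

theorem maj_eq_of_two_mul_card_lt {T : ℕ} {hs : Fin T → X → Bool} {x : X} {y : Bool}
    (h : 2 * (Finset.univ.filter fun t => hs t x ≠ y).card < T) : Maj T hs x = y := by
  have hsplit :=
    Finset.card_filter_add_card_filter_not (s := Finset.univ) (fun t => hs t x = true)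
  cases y <;> simp_all [Maj] <;> omega

def errorPattern (S : Fin m → X × Bool) (h : X → Bool) : Fin m → Bool :=
  fun i => decide (h (S i).1 ≠ (S i).2)

theorem measurable_errorPattern [MeasurableSpace X] (S : Fin m → X × Bool) :
    Measurable (errorPattern S) :=
  measurable_pi_lambda _ fun i =>
    (Measurable.of_discrete (f := fun b => decide (b ≠ (S i).2))).comp
      (measurable_pi_apply (S i).1)

def weightedError (w : Fin m → ℝ) (q : Fin m → Bool) : ℝ :=
  ∑ i with q i, w i

def goodPatterns (γ : ℝ) (w : Fin m → ℝ) : Set (Fin m → Bool) :=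
  {q | weightedError w q ≤ (1 / 2 - γ) * ∑ i, w i}

section WeightedSample

variable [MeasurableSpace X] [MeasurableSingletonClass X]

noncomputable def weightedSample (S : Fin m → X × Bool) (w : Fin m → ℝ) : Measure (X × Bool) :=
  ∑ i, ENNReal.ofReal (w i / ∑ j, w j) • Measure.dirac (S i)

variable {S : Fin m → X × Bool} {w : Fin m → ℝ}

open scoped Classical in
theorem weightedSample_apply (hw : ∀ i, 0 ≤ w i) (E : Set (X × Bool)) :
    weightedSample S w E = ENNReal.ofReal ((∑ i with S i ∈ E, w i) / ∑ j, w j) := by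
  have hw' : ∀ i ∈ Finset.univ, 0 ≤ w i / ∑ j, w j :=
    fun i _ => div_nonneg (hw i) (Finset.sum_nonneg fun j _ => hw j)
  rw [Finset.sum_div, ENNReal.ofReal_sum_of_nonneg fun i hi => hw' i (Finset.filter_subset _ _ hi),
    Finset.sum_filter]
  simp [weightedSample, Measure.dirac_apply, Set.indicator]

theorem isProbabilityMeasure_weightedSample (hw : ∀ i, 0 ≤ w i) (hW : 0 < ∑ i, w i) :
    IsProbabilityMeasure (weightedSample S w) :=
  ⟨by simp [weightedSample_apply hw, hW.ne']⟩

theorem popLoss_weightedSample (hw : ∀ i, 0 ≤ w i) (h : X → Bool) :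
    popLoss (weightedSample S w) h =
      ENNReal.ofReal (weightedError w (errorPattern S h) / ∑ j, w j) := by
  simp [popLoss, weightedSample_apply hw, weightedError, errorPattern]

theorem realizableDist_weightedSample {H : Set (X → Bool)} (hS : Realizable H S)
    (hw : ∀ i, 0 ≤ w i) : RealizableDist H (weightedSample S w) := by
  obtain ⟨h, hH, hh : ∀ i, h (S i).1 = (S i).2⟩ := hS
  refine le_antisymm ((iInf₂_le h hH).trans_eq ?_) zero_le
  simp [popLoss_weightedSample hw, weightedError, errorPattern, hh]

theorem le_measure_errorPattern_preimage_goodPatterns {H : Set (X → Bool)}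
    {μ : Measure (X → Bool)} {γ β : ℝ} (hγ : γ ≤ 1 / 2)
    (hgood : ∀ D : Measure (X × Bool), IsProbabilityMeasure D → RealizableDist H D →
      ENNReal.ofReal β ≤ μ {h | popLoss D h ≤ ENNReal.ofReal (1 / 2 - γ)})
    (hS : Realizable H S) (hw : ∀ i, 0 ≤ w i) (hW : 0 < ∑ i, w i) :
    ENNReal.ofReal β ≤ μ (errorPattern S ⁻¹' goodPatterns γ w) := by
  refine (hgood _ (isProbabilityMeasure_weightedSample hw hW)
    (realizableDist_weightedSample hS hw)).trans_eq (congr_arg μ ?_)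
  ext h
  simp only [Set.mem_ofPred_eq, Set.mem_preimage, goodPatterns, popLoss_weightedSample hw,
    ENNReal.ofReal_le_ofReal_iff (sub_nonneg.mpr hγ), div_le_iff₀ hW]

end WeightedSample

noncomputable def mwWeights (γ : ℝ) (L : List (Fin m → Bool)) (i : Fin m) : ℝ :=
  ((1 + 2 * γ) / (1 - 2 * γ)) ^ L.countP (· i)

theorem mwWeights_pos {γ : ℝ} (hγ0 : 0 ≤ γ) (hγ1 : γ < 1 / 2) (L : List (Fin m → Bool))
    (i : Fin m) : 0 < mwWeights γ L i :=
  pow_pos (div_pos (by linarith) (by linarith)) _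

theorem sum_mwWeights_append_le {γ : ℝ} (hγ0 : 0 ≤ γ) (hγ1 : γ < 1 / 2)
    {L : List (Fin m → Bool)} {q : Fin m → Bool} (hq : q ∈ goodPatterns γ (mwWeights γ L)) :
    ∑ i, mwWeights γ (L ++ [q]) i ≤ (1 + 2 * γ) * ∑ i, mwWeights γ L i := by
  set a := (1 + 2 * γ) / (1 - 2 * γ)
  have hγ2 : 1 - 2 * γ ≠ 0 := by linarith
  have ha : a - 1 = 4 * γ / (1 - 2 * γ) := by simp only [a]; field_simp; ring
  have hrate : (a - 1) * (1 / 2 - γ) = 2 * γ := by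
    rw [ha, div_mul_eq_mul_div, div_eq_iff hγ2]; ring
  have hsplit : ∑ i, mwWeights γ (L ++ [q]) i =
      ∑ i, mwWeights γ L i + (a - 1) * weightedError (mwWeights γ L) q := by
    rw [weightedError, Finset.mul_sum, Finset.sum_filter, ← Finset.sum_add_distrib]
    refine Finset.sum_congr rfl fun i _ => ?_
    cases hi : q i
    · simp [mwWeights, hi]
    · simp [mwWeights, hi, pow_succ, a]; ring
  calc ∑ i, mwWeights γ (L ++ [q]) i
      ≤ ∑ i, mwWeights γ L i + (a - 1) * ((1 / 2 - γ) * ∑ i, mwWeights γ L i) := by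
        rw [hsplit, ha]
        gcongr
        · exact div_nonneg (by linarith) (by linarith)
        · exact hq
    _ = (1 + 2 * γ) * ∑ i, mwWeights γ L i := by
        linear_combination (∑ i, mwWeights γ L i) * hrate

theorem sq_mul_one_sub_pow_lt_one {γ : ℝ} (hγ0 : 0 < γ) (hγ1 : γ < 1 / 2) (hm : 2 ≤ m) {T : ℕ}
    (hT : 2 * Real.logb 2 m / γ ^ 2 ≤ T) : (m : ℝ) ^ 2 * (1 - 4 * γ ^ 2) ^ T < 1 := by
  have hm0 : (0 : ℝ) < m := by positivity
  have hlogm : 0 < Real.log m := Real.log_pos (by exact_mod_cast hm)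
  have hlog2 : Real.log 2 < 1 := by linarith [Real.log_two_lt_d9]
  have hexponent : 2 * Real.log m < 4 * γ ^ 2 * T := by
    rw [div_le_iff₀ (by positivity), Real.logb, div_eq_mul_inv] at hT
    have : Real.log m < Real.log m * (Real.log 2)⁻¹ := by
      rw [lt_mul_inv_iff₀ (Real.log_pos one_lt_two)]; nlinarith
    nlinarith
  calc (m : ℝ) ^ 2 * (1 - 4 * γ ^ 2) ^ T ≤ (m : ℝ) ^ 2 * Real.exp (-(4 * γ ^ 2)) ^ T := by
        gcongr
        · nlinarith
        · exact Real.one_sub_le_exp_neg _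
    _ = Real.exp (2 * Real.log m - 4 * γ ^ 2 * T) := by
        rw [← Real.exp_log hm0, ← Real.exp_nat_mul, ← Real.exp_nat_mul, ← Real.exp_add,
          Real.log_exp]
        congr 1; push_cast; ring
    _ < 1 := Real.exp_lt_one_iff.mpr (by linarith)

theorem two_mul_countP_lt_length {γ : ℝ} (hγ0 : 0 < γ) (hγ1 : γ < 1 / 2) (hm : 2 ≤ m)
    {L : List (Fin m → Bool)} (hT : 2 * Real.logb 2 m / γ ^ 2 ≤ L.length)
    (hL : AdaptivelyIn (fun M => goodPatterns γ (mwWeights γ M)) L) (i : Fin m) :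
    2 * L.countP (· i) < L.length := by
  by_contra! hcount
  set a := (1 + 2 * γ) / (1 - 2 * γ)
  set T := L.length
  have h2γ : 0 < 1 - 2 * γ := by linarith
  have ha : 1 ≤ a := (le_div_iff₀ h2γ).mpr (by linarith)
  have htotal : ∑ j, mwWeights γ L j ≤ (1 + 2 * γ) ^ T * m := by
    simpa [mwWeights] using
      hL.le_pow_mul (Φ := fun M => ∑ j, mwWeights γ M j) (by linarith)
        fun M q hq => sum_mwWeights_append_le hγ0.le hγ1 hq
  have hi : a ^ L.countP (· i) ≤ (1 + 2 * γ) ^ T * m :=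
    (Finset.single_le_sum (fun j _ => (mwWeights_pos hγ0.le hγ1 L j).le)
      (Finset.mem_univ i)).trans htotal
  have hsq : a ^ T ≤ ((1 + 2 * γ) ^ T * m) ^ 2 := calc
    a ^ T ≤ a ^ (2 * L.countP (· i)) := pow_le_pow_right₀ ha hcount
    _ = (a ^ L.countP (· i)) ^ 2 := by ring
    _ ≤ _ := by gcongr
  have hcancel : a ^ T * (1 - 2 * γ) ^ T = (1 + 2 * γ) ^ T := by
    rw [← mul_pow, div_mul_cancel₀ _ h2γ.ne']
  have : (1 + 2 * γ) ^ T * 1 ≤ (1 + 2 * γ) ^ T * ((m : ℝ) ^ 2 * (1 - 4 * γ ^ 2) ^ T) := calc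
    (1 + 2 * γ) ^ T * 1 = a ^ T * (1 - 2 * γ) ^ T := by rw [hcancel, mul_one]
    _ ≤ ((1 + 2 * γ) ^ T * m) ^ 2 * (1 - 2 * γ) ^ T := by gcongr
    _ = (1 + 2 * γ) ^ T * ((m : ℝ) ^ 2 * (1 - 4 * γ ^ 2) ^ T) := by
      rw [show (1 - 4 * γ ^ 2) ^ T = (1 + 2 * γ) ^ T * (1 - 2 * γ) ^ T by rw [← mul_pow]; ring]
      ring
  exact (sq_mul_one_sub_pow_lt_one hγ0 hγ1 hm hT).not_ge
    (le_of_mul_le_mul_left this (by positivity))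

end

theorem boosting_majority_general {X : Type*}
    [MeasurableSpace X] [MeasurableSingletonClass X]
    (H : Set (X → Bool))
    (γ β : ℝ) (hγ0 : 0 < γ) (hγ1 : γ < 1 / 2) (hβ : 0 < β)
    (m : ℕ) (hm : 2 ≤ m)
    (T : ℕ) (hT : 2 * Real.logb 2 m / γ ^ 2 ≤ T)
    (μ : Measure (X → Bool)) (hμ : IsProbabilityMeasure μ)
    (hgood : ∀ D : Measure (X × Bool), IsProbabilityMeasure D → RealizableDist H D →
      ENNReal.ofReal β ≤ μ {h | popLoss D h ≤ ENNReal.ofReal (1 / 2 - γ)}) :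
    ∀ S : Fin m → X × Bool, Realizable H S →
      ENNReal.ofReal (β ^ T) ≤
        (Measure.pi fun _ : Fin T => μ) {hs | Consistent (Maj T hs) S} := by
  intro S hS
  have hpat := measurable_errorPattern S
  have := Measure.isProbabilityMeasure_map (μ := μ) hpat.aemeasurable
  set G : List (Fin m → Bool) → Set (Fin m → Bool) := fun L => goodPatterns γ (mwWeights γ L)
  have hG : ∀ L, ENNReal.ofReal β ≤ μ.map (errorPattern S) (G L) := fun L => by
    rw [Measure.map_apply hpat .of_discrete]
    exact le_measure_errorPattern_preimage_goodPatterns hγ1.le hgood hS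
      (fun i => (mwWeights_pos hγ0.le hγ1 L i).le)
      (Finset.sum_pos (fun i _ => mwWeights_pos hγ0.le hγ1 L i) ⟨⟨0, by omega⟩, by simp⟩)
  calc ENNReal.ofReal (β ^ T) = ENNReal.ofReal β ^ T := ENNReal.ofReal_pow hβ.le T
    _ ≤ Measure.pi (fun _ : Fin T => μ.map (errorPattern S)) {p | AdaptivelyIn G (List.ofFn p)} :=
      le_pi_setOf_adaptivelyIn _ T G hG
    _ = Measure.pi (fun _ : Fin T => μ)
          {hs | AdaptivelyIn G (List.ofFn fun t => errorPattern S (hs t))} := by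
      rw [← Measure.pi_map_pi fun _ => hpat.aemeasurable,
        Measure.map_apply (by fun_prop) .of_discrete]
      rfl
    _ ≤ _ := measure_mono fun hs hhs => by
      intro i
      apply maj_eq_of_two_mul_card_lt
      simpa [List.countP_ofFn, errorPattern] using
        two_mul_countP_lt_length hγ0 hγ1 hm (by simpa using hT) hhs i

/-- Let `γ ∈ (0,1/2)`, `β > 0`, `m ≥ 2`, and let `T` be an odd integer with
`T ≥ 2·log₂(m)/γ²`. Suppose `μ̃` is a (Borel) probability measure on `{0,1}^X` such that for
every distribution `D` realizable by `H`, `μ̃({h : L_D(h) ≤ 1/2 − γ}) ≥ β`. Then for every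
dataset `S` of size `m` realizable by `H`, the probability over `h_1, …, h_T ∼ μ̃` i.i.d. that
the majority vote `MAJ(h_1,…,h_T)` is consistent with `S` is at least `β^T`. -/
theorem boosting_majority {X : Type*} [Countable X]
    [MeasurableSpace X] [MeasurableSingletonClass X]
    (H : Set (X → Bool)) (hH : H.Nonempty)
    (γ β : ℝ) (hγ0 : 0 < γ) (hγ1 : γ < 1 / 2) (hβ : 0 < β)
    (m : ℕ) (hm : 2 ≤ m)
    (T : ℕ) (hTodd : Odd T) (hT : 2 * Real.logb 2 m / γ ^ 2 ≤ T)
    (μ : Measure (X → Bool)) (hμ : IsProbabilityMeasure μ)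
    (hgood : ∀ D : Measure (X × Bool), IsProbabilityMeasure D → RealizableDist H D →
      ENNReal.ofReal β ≤ μ {h | popLoss D h ≤ ENNReal.ofReal (1 / 2 - γ)}) :
    ∀ S : Fin m → X × Bool, Realizable H S →
      ENNReal.ofReal (β ^ T) ≤
        (Measure.pi fun _ : Fin T => μ) {hs | Consistent (Maj T hs) S} :=
  boosting_majority_general H γ β hγ0 hγ1 hβ m hm T hT μ hμ hgood

end ContradictionGraph
end

section
/- Let X be an arbitrary (possibly uncountable) set, H ⊆ {0,1}^X a nonempty concept class, and m ∈ ℕ. Define 1/χ*_m = sup_{μ ∈ Δ({0,1}^X)} inf_{ν ∈ Δ(V_m(H))} E_{h∼μ, S∼ν}[ 1[h is consistent with S] ] and 1/ω*_m = inf_{ν ∈ Δ(V_m(H))} sup_{μ ∈ Δ({0,1}^X)} E_{h∼μ, S∼ν}[ 1[h is consistent with S] ], where Δ({0,1}^X) is the set of regular Borel probability measures on {0,1}^X (product topology) and Δ(V_m(H)) is the set of finitely supported probability distributions on the H-realizable datasets of size m. Then ω*_m = χ*_m ≤ 2^m, and moreover the supremum defining 1/χ*_m is attained: there exists μ* ∈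 Δ({0,1}^X) with inf_{ν} E_{h∼μ*, S∼ν}[ 1[h is consistent with S] ] = 1/χ*_m. -/
/-!
For a fixed finitely supported `ν` the payoff is linear in `μ` and the events
"`h` is consistent with `S`" are clopen, so the best response to `ν` is a single hypothesis
(a Dirac mass, which may be replaced by a regular measure agreeing with it on clopen sets), and
a uniformly random labelling of the finitely many points in the support of `ν` already scores
at least `2^{-m}`.

Let `v = inf_ν sup_h`. On finitely many datasets consistency only depends on the labels of
finitely many points, so von Neumann's minimax theorem for the resulting matrix game gives a
finite mixture of Dirac masses that is consistent with each of these datasets with probability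
at least `v`. The probability measures with this property for one dataset form a closed subset
of the weakly compact space of probability measures on `{0,1}^X`; a common point of all of them,
made regular by the Riesz–Markov–Kakutani theorem, attains `v`, which gives `sup inf ≥ inf sup`.
-/

open MeasureTheory
open scoped ENNReal

namespace ContradictionGraph

/-- The hypothesis space `{0,1}^X`, considered with the product topology (product of discrete
topologies on `{0,1}`) and its Borel σ-algebra. -/
def Hyp (X : Type*) : Type _ := X → Bool

instance (X : Type*) : TopologicalSpace (Hyp X) :=
  inferInstanceAs (TopologicalSpace (X → Bool))

noncomputable instance (X : Type*) : MeasurableSpace (Hyp X) := borel (Hyp X)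

instance (X : Type*) : BorelSpace (Hyp X) := ⟨rfl⟩

end ContradictionGraph

namespace ContradictionGraph

variable {X : Type*}

/-- A regular Borel probability measure on the hypothesis space `{0,1}^X`: an element of
`Δ({0,1}^X)`. -/
def IsRegularHypMeasure (μ : Measure (Hyp X)) : Prop :=
  IsProbabilityMeasure μ ∧ μ.InnerRegular ∧ μ.OuterRegular

/-- A finitely supported probability distribution on the `H`-realizable datasets of size `m`:
an element of `Δ(V_m(H))`. -/
def IsFinsuppDataDist (H : Set (X → Bool)) (m : ℕ) (ν : Vm H m → ℝ≥0∞) : Prop :=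
  (Function.support ν).Finite ∧ ∑' S, ν S = 1

/-- The payoff `E_{h∼μ, S∼ν} [ 1[h is consistent with S] ]`. -/
noncomputable def pay (H : Set (X → Bool)) (m : ℕ)
    (μ : Measure (Hyp X)) (ν : Vm H m → ℝ≥0∞) : ℝ≥0∞ :=
  ∑' S : Vm H m, ν S * μ {h : Hyp X | Consistent h S.1}

end ContradictionGraph

open Matrix in
theorem Matrix.exists_mem_stdSimplex_forall_le_mulVec {ι κ : Type*} [Fintype ι] [Fintype κ]
    [Nonempty ι] [Nonempty κ] (A : Matrix κ ι ℝ) {v : ℝ}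
    (h : ∀ q ∈ stdSimplex ℝ κ, ∃ i, v ≤ (q ᵥ* A) i) :
    ∃ w ∈ stdSimplex ℝ ι, ∀ k, v ≤ (A *ᵥ w) k := by
  classical
  obtain ⟨q, hq, w, hw, hsaddle⟩ := Sion.exists_isSaddlePointOn (f := fun q w => q ⬝ᵥ A *ᵥ w)
    ⟨_, single_mem_stdSimplex ℝ (Classical.arbitrary κ)⟩ (convex_stdSimplex ℝ κ)
    (isCompact_stdSimplex ℝ κ)
    (fun w _ => (by fun_prop : Continuous fun q : κ → ℝ => q ⬝ᵥ A *ᵥ w)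
      |>.lowerSemicontinuous.lowerSemicontinuousOn _)
    (fun w _ => ((dotProductBilin ℝ ℝ).flip (A *ᵥ w) |>.convexOn
      (convex_stdSimplex ℝ κ)).quasiconvexOn)
    (convex_stdSimplex ℝ ι) ⟨_, single_mem_stdSimplex ℝ (Classical.arbitrary ι)⟩
    (isCompact_stdSimplex ℝ ι)
    (fun q _ => (by fun_prop : Continuous fun w : ι → ℝ => q ⬝ᵥ A *ᵥ w)
      |>.upperSemicontinuous.upperSemicontinuousOn _)
    (fun q _ => ((dotProductBilin ℝ ℝ q).comp A.mulVecLin |>.concaveOn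
      (convex_stdSimplex ℝ ι)).quasiconcaveOn)
  obtain ⟨i, hi⟩ := h q hq
  refine ⟨w, hw, fun k => hi.trans ?_⟩
  have : q ⬝ᵥ A *ᵥ Pi.single i 1 ≤ Pi.single k 1 ⬝ᵥ A *ᵥ w :=
    hsaddle _ (single_mem_stdSimplex ℝ k) _ (single_mem_stdSimplex ℝ i)
  rwa [dotProduct_mulVec, dotProduct_single, mul_one, single_dotProduct, one_mul] at this

theorem ENNReal.tsum_sum_single_mul {β κ : Type*} [DecidableEq β] [Fintype κ]
    (c : κ → ℝ≥0∞) (b : κ → β) (f : β → ℝ≥0∞) :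
    ∑' x, (∑ k, Pi.single (b k) (c k) : β → ℝ≥0∞) x * f x = ∑ k, c k * f (b k) := by
  simp only [Finset.sum_apply, Finset.sum_mul]
  rw [Summable.tsum_finsetSum fun _ _ => ENNReal.summable]
  refine Finset.sum_congr rfl fun k _ => ?_
  simp [Pi.single_apply, ite_mul]

theorem ENNReal.sum_ofReal_mul_measure {ι α : Type*} [MeasurableSpace α] (s : Finset ι)
    {a : ι → ℝ} (ha : ∀ i ∈ s, 0 ≤ a i) (μ : ι → Measure α) [∀ i, IsFiniteMeasure (μ i)]
    (t : ι → Set α) :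
    ∑ i ∈ s, ENNReal.ofReal (a i) * μ i (t i) =
      ENNReal.ofReal (∑ i ∈ s, a i * (μ i).real (t i)) := by
  rw [ENNReal.ofReal_sum_of_nonneg fun i hi => mul_nonneg (ha i hi) measureReal_nonneg]
  refine Finset.sum_congr rfl fun i hi => ?_
  rw [ENNReal.ofReal_mul (ha i hi), ofReal_measureReal]

section ClopenSets

variable {Ω : Type*} [TopologicalSpace Ω] [MeasurableSpace Ω] [OpensMeasurableSpace Ω]

theorem MeasureTheory.measure_eq_ofReal_integral_indicator (μ : Measure Ω) [IsFiniteMeasure μ]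
    {C : Set Ω} (hC : IsClopen C) :
    μ C = ENNReal.ofReal (∫ x, BoundedContinuousFunction.indicator C hC x ∂μ) := by
  simp [integral_indicator_one hC.isOpen.measurableSet]

theorem MeasureTheory.ProbabilityMeasure.continuous_apply_of_isClopen {C : Set Ω}
    (hC : IsClopen C) : Continuous fun μ : ProbabilityMeasure Ω => (μ : Measure Ω) C := by
  simp_rw [measure_eq_ofReal_integral_indicator _ hC]
  exact ENNReal.continuous_ofReal.comp (continuous_integral_boundedContinuousFunction _)

theorem MeasureTheory.Measure.exists_regular_eq_on_isClopen [T2Space Ω] [CompactSpace Ω]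
    [BorelSpace Ω] (μ : Measure Ω) [IsFiniteMeasure μ] :
    ∃ ν : Measure Ω, ν.Regular ∧ IsFiniteMeasure ν ∧ ∀ C, IsClopen C → ν C = μ C := by
  obtain ⟨ν, hreg, hfin, hint⟩ := μ.exists_regular_eq_of_compactSpace
  refine ⟨ν, hreg, hfin, fun C hC => ?_⟩
  rw [measure_eq_ofReal_integral_indicator _ hC, measure_eq_ofReal_integral_indicator _ hC, hint]

end ClopenSets

namespace ContradictionGraph

variable {X : Type*}

instance : T2Space (Hyp X) := inferInstanceAs (T2Space (X → Bool))

instance : CompactSpace (Hyp X) := inferInstanceAs (CompactSpace (X → Bool))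

instance : Nonempty (Hyp X) := ⟨fun _ => false⟩

theorem isClopen_setOf_consistent {m : ℕ} (S : Fin m → X × Bool) :
    IsClopen {h : Hyp X | Consistent h S} := by
  simp only [Consistent, Set.ofPred_forall]
  exact isClopen_iInter_of_finite fun i =>
    (isClopen_discrete {(S i).2}).preimage (continuous_apply (A := fun _ : X => Bool) (S i).1)

theorem exists_isRegularHypMeasure_eq_on_isClopen (μ : Measure (Hyp X))
    [IsProbabilityMeasure μ] :
    ∃ μ' : Measure (Hyp X), IsRegularHypMeasure μ' ∧ ∀ C, IsClopen C → μ' C = μ C := by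
  obtain ⟨μ', hreg, hfin, heq⟩ := μ.exists_regular_eq_on_isClopen
  have : IsProbabilityMeasure μ' := ⟨by rw [heq _ isClopen_univ, measure_univ]⟩
  exact ⟨μ', ⟨this, inferInstance, inferInstance⟩, heq⟩

noncomputable def extendByFalse (T : Finset X) (g : T → Bool) : Hyp X :=
  Function.extend Subtype.val g fun _ => false

theorem extendByFalse_apply (T : Finset X) (g : T → Bool) (t : T) :
    extendByFalse T g t = g t :=
  Subtype.val_injective.extend_apply _ _ _

theorem consistent_extendByFalse_iff {T : Finset X} {m : ℕ} {S : Fin m → X × Bool}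
    (hS : ∀ i, (S i).1 ∈ T) (g : T → Bool) :
    Consistent (extendByFalse T g) S ↔ ∀ i, g ⟨(S i).1, hS i⟩ = (S i).2 := by
  refine forall_congr' fun i => ?_
  rw [← extendByFalse_apply T g ⟨(S i).1, hS i⟩]

theorem consistent_extendByFalse_restrict_iff {T : Finset X} {m : ℕ} {S : Fin m → X × Bool}
    (hS : ∀ i, (S i).1 ∈ T) (h : Hyp X) :
    Consistent (extendByFalse T fun t => h t) S ↔ Consistent h S :=
  consistent_extendByFalse_iff hS _

noncomputable def randomLabelling (T : Finset X) : Measure (Hyp X) :=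
  (Measure.pi fun _ : T => (PMF.uniformOfFintype Bool).toMeasure).map (extendByFalse T)

instance (T : Finset X) : IsProbabilityMeasure (randomLabelling T) :=
  Measure.isProbabilityMeasure_map (measurable_of_countable _).aemeasurable

theorem inv_two_pow_le_randomLabelling {T : Finset X} {m : ℕ} {S : Fin m → X × Bool}
    {h₀ : X → Bool} (h₀S : Consistent h₀ S) (hS : ∀ i, (S i).1 ∈ T) :
    ((2 : ℝ≥0∞) ^ m)⁻¹ ≤ randomLabelling T {h | Consistent h S} := by
  classical
  let P : Finset T := Finset.univ.image fun i => ⟨(S i).1, hS i⟩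
  have hbox : Set.univ.pi (fun t : T => if t ∈ P then {h₀ t} else Set.univ) ⊆
      extendByFalse T ⁻¹' {h | Consistent h S} := by
    intro g hg
    refine (consistent_extendByFalse_iff hS g).2 fun i => ?_
    have : g ⟨(S i).1, hS i⟩ ∈ if (⟨(S i).1, hS i⟩ : T) ∈ P then {h₀ (S i).1} else Set.univ :=
      hg _ (Set.mem_univ _)
    rw [if_pos (Finset.mem_image_of_mem _ (Finset.mem_univ i))] at this
    exact this.trans (h₀S i)
  rw [randomLabelling, Measure.map_apply (measurable_of_countable _)
    (isClopen_setOf_consistent S).isOpen.measurableSet]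
  refine le_trans ?_ (measure_mono hbox)
  rw [Measure.pi_pi]
  simp only [apply_ite, measure_univ, PMF.toMeasure_apply_singleton _ _
    (measurableSet_singleton _), PMF.uniformOfFintype_apply, Fintype.card_bool]
  rw [Finset.prod_ite_mem, Finset.univ_inter, Finset.prod_const, ENNReal.inv_pow]
  exact pow_le_pow_right_of_le_one' (by norm_num) (Finset.card_image_le.trans (by simp))

variable {H : Set (X → Bool)} {m : ℕ}

theorem pay_eq_lintegral_pay_dirac {ν : Vm H m → ℝ≥0∞} (hν : (Function.support ν).Finite)
    (μ : Measure (Hyp X)) :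
    pay H m μ ν = ∫⁻ h, pay H m (Measure.dirac h) ν ∂μ := by
  have hsupp : ∀ μ' : Measure (Hyp X),
      (Function.support fun S : Vm H m => ν S * μ' {h | Consistent h S.1}) ⊆ hν.toFinset :=
    fun μ' S hS => hν.mem_toFinset.2 (left_ne_zero_of_mul hS)
  have hmeas (S : Vm H m) :
      Measurable fun h : Hyp X => Measure.dirac h {h' | Consistent h' S.1} :=
    (Measure.measurable_coe (isClopen_setOf_consistent S.1).isOpen.measurableSet).comp
      Measure.measurable_dirac
  simp only [pay, tsum_eq_sum' (hsupp _)]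
  rw [lintegral_finsetSum' _ fun S _ => ((hmeas S).const_mul _).aemeasurable]
  refine Finset.sum_congr rfl fun S _ => ?_
  rw [lintegral_const_mul _ (hmeas S), ← Measure.bind_apply
    (isClopen_setOf_consistent S.1).isOpen.measurableSet Measure.measurable_dirac.aemeasurable,
    Measure.bind_dirac]

theorem pay_le_iSup_pay_dirac {ν : Vm H m → ℝ≥0∞} (hν : (Function.support ν).Finite)
    (μ : Measure (Hyp X)) [IsProbabilityMeasure μ] :
    pay H m μ ν ≤ ⨆ h, pay H m (Measure.dirac h) ν := by
  rw [pay_eq_lintegral_pay_dirac hν]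
  calc ∫⁻ h, pay H m (Measure.dirac h) ν ∂μ ≤ ∫⁻ _, ⨆ h, pay H m (Measure.dirac h) ν ∂μ :=
        lintegral_mono fun h => le_iSup (fun h => pay H m (Measure.dirac h) ν) h
    _ = ⨆ h, pay H m (Measure.dirac h) ν := by simp

theorem le_pay_of_forall_le {μ : Measure (Hyp X)} {ν : Vm H m → ℝ≥0∞} (hν : ∑' S, ν S = 1)
    {c : ℝ≥0∞} (hc : ∀ S, ν S ≠ 0 → c ≤ μ {h | Consistent h S.1}) : c ≤ pay H m μ ν :=
  calc c = ∑' S, ν S * c := by rw [ENNReal.tsum_mul_right, hν, one_mul]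
    _ ≤ pay H m μ ν := ENNReal.tsum_le_tsum fun S => by
      by_cases hS : ν S = 0
      · simp [hS]
      · exact mul_le_mul_right (hc S hS) _

theorem iSup_regular_pay_eq {ν : Vm H m → ℝ≥0∞} (hν : (Function.support ν).Finite) :
    ⨆ (μ : Measure (Hyp X)) (_ : IsRegularHypMeasure μ), pay H m μ ν =
      ⨆ h, pay H m (Measure.dirac h) ν := by
  refine le_antisymm (iSup₂_le fun μ hμ => ?_) (iSup_le fun h => ?_)
  · have : IsProbabilityMeasure μ := hμ.1
    exact pay_le_iSup_pay_dirac hν μ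
  · obtain ⟨μ, hμ, heq⟩ := exists_isRegularHypMeasure_eq_on_isClopen (Measure.dirac h)
    refine le_iSup₂_of_le μ hμ (le_of_eq ?_)
    simp only [pay, heq _ (isClopen_setOf_consistent _)]

theorem inv_two_pow_le_iSup_pay_dirac {ν : Vm H m → ℝ≥0∞} (hν : IsFinsuppDataDist H m ν) :
    ((2 : ℝ≥0∞) ^ m)⁻¹ ≤ ⨆ h, pay H m (Measure.dirac h) ν := by
  classical
  let T : Finset X := hν.1.toFinset.biUnion fun S => Finset.univ.image fun i => (S.1 i).1
  refine le_trans (le_pay_of_forall_le (μ := randomLabelling T) hν.2 fun S hS => ?_)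
    (pay_le_iSup_pay_dirac hν.1 _)
  obtain ⟨h₀, -, h₀S⟩ := S.2
  refine inv_two_pow_le_randomLabelling (T := T) h₀S fun i => Finset.mem_biUnion.2 ?_
  exact ⟨S, hν.1.mem_toFinset.2 hS, Finset.mem_image_of_mem _ (Finset.mem_univ i)⟩

theorem pay_sum_single {κ : Type*} [Fintype κ] [DecidableEq (Vm H m)] (μ : Measure (Hyp X))
    (D : κ → Vm H m) (c : κ → ℝ≥0∞) :
    pay H m μ (∑ k, Pi.single (D k) (c k)) = ∑ k, c k * μ {h | Consistent h (D k).1} :=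
  ENNReal.tsum_sum_single_mul c D _

theorem isFinsuppDataDist_sum_single {κ : Type*} [Fintype κ] [DecidableEq (Vm H m)]
    (D : κ → Vm H m) {c : κ → ℝ≥0∞} (hc : ∑ k, c k = 1) :
    IsFinsuppDataDist H m (∑ k, Pi.single (D k) (c k)) := by
  refine ⟨(Set.finite_range D).subset fun S hS => ?_, ?_⟩
  · by_contra hS'
    refine hS ?_
    rw [Finset.sum_apply]
    exact Finset.sum_eq_zero fun k _ => Pi.single_eq_of_ne (fun h => hS' ⟨k, h.symm⟩) _
  · simpa [hc] using ENNReal.tsum_sum_single_mul c D 1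

open Matrix in
theorem exists_probabilityMeasure_forall_le {v : ℝ≥0∞}
    (hv : ∀ ν, IsFinsuppDataDist H m ν → v ≤ ⨆ h, pay H m (Measure.dirac h) ν)
    {κ : Type*} [Fintype κ] (D : κ → Vm H m) :
    ∃ μ : ProbabilityMeasure (Hyp X),
      ∀ k, v ≤ (μ : Measure (Hyp X)) {h | Consistent h (D k).1} := by
  classical
  cases isEmpty_or_nonempty κ with
  | inl _ => exact ⟨⟨Measure.dirac (Classical.arbitrary _), inferInstance⟩, isEmptyElim⟩
  | inr _ =>
  let T : Finset X := Finset.univ.biUnion fun k => Finset.univ.image fun i => ((D k).1 i).1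
  have hT (k : κ) (i : Fin m) : ((D k).1 i).1 ∈ T :=
    Finset.mem_biUnion.2 ⟨k, Finset.mem_univ _, Finset.mem_image_of_mem _ (Finset.mem_univ i)⟩
  let A : Matrix κ (T → Bool) ℝ := fun k g =>
    (Measure.dirac (extendByFalse T g)).real {h | Consistent h (D k).1}
  -- Consistency with the datasets `D k` only sees labels on `T`, so restricting hypotheses to
  -- `T` turns the game against `D` into a finite matrix game.
  have hdirac (h : Hyp X) (k : κ) : Measure.dirac h {h' | Consistent h' (D k).1} =
      Measure.dirac (extendByFalse T fun t => h t) {h' | Consistent h' (D k).1} := by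
    simp only [Measure.dirac_apply' _ (isClopen_setOf_consistent _).isOpen.measurableSet,
      Set.indicator_apply, Set.mem_ofPred_eq, consistent_extendByFalse_restrict_iff (hT k),
      Pi.one_apply]
  have hq : ∀ q ∈ stdSimplex ℝ κ, ∃ g, v ≤ ENNReal.ofReal ((q ᵥ* A) g) := by
    intro q hq
    let ν : Vm H m → ℝ≥0∞ := ∑ k, Pi.single (D k) (ENNReal.ofReal (q k))
    have hν : IsFinsuppDataDist H m ν := isFinsuppDataDist_sum_single D (by
      rw [← ENNReal.ofReal_sum_of_nonneg fun k _ => hq.1 k, hq.2, ENNReal.ofReal_one])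
    obtain ⟨g, hg⟩ := Finite.exists_max fun g => (q ᵥ* A) g
    refine ⟨g, (hv ν hν).trans (iSup_le fun h => ?_)⟩
    rw [pay_sum_single]
    simp only [hdirac h]
    rw [ENNReal.sum_ofReal_mul_measure _ (fun k _ => hq.1 k)]
    exact ENNReal.ofReal_le_ofReal (hg _)
  have hv_top : v ≠ ⊤ := by
    obtain ⟨g, hg⟩ := hq _ (single_mem_stdSimplex ℝ (Classical.arbitrary κ))
    exact ne_top_of_le_ne_top ENNReal.ofReal_ne_top hg
  obtain ⟨w, hw, hvw⟩ := A.exists_mem_stdSimplex_forall_le_mulVec (v := v.toReal) fun q hq' => by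
    obtain ⟨g, hg⟩ := hq q hq'
    exact ⟨g, ENNReal.toReal_le_of_le_ofReal
      (Finset.sum_nonneg fun k _ => mul_nonneg (hq'.1 k) measureReal_nonneg) hg⟩
  let μ : Measure (Hyp X) := ∑ g, ENNReal.ofReal (w g) • Measure.dirac (extendByFalse T g)
  have hμ (C : Set (Hyp X)) :
      μ C = ENNReal.ofReal (∑ g, w g * (Measure.dirac (extendByFalse T g)).real C) := by
    simp only [μ, Measure.coe_finsetSum, Finset.sum_apply, Measure.smul_apply, smul_eq_mul]
    exact ENNReal.sum_ofReal_mul_measure _ (fun g _ => hw.1 g) _ _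
  have : IsProbabilityMeasure μ := ⟨by simp [hμ, hw.2]⟩
  refine ⟨⟨μ, this⟩, fun k => ?_⟩
  rw [ProbabilityMeasure.coe_mk, hμ, ← ENNReal.ofReal_toReal hv_top]
  refine ENNReal.ofReal_le_ofReal ((hvw k).trans_eq ?_)
  simp only [mulVec, dotProduct, A, mul_comm]

theorem exists_isRegularHypMeasure_forall_le {v : ℝ≥0∞}
    (hv : ∀ ν, IsFinsuppDataDist H m ν → v ≤ ⨆ h, pay H m (Measure.dirac h) ν) :
    ∃ μ, IsRegularHypMeasure μ ∧ ∀ S : Vm H m, v ≤ μ {h | Consistent h S.1} := by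
  let K (S : Vm H m) : Set (ProbabilityMeasure (Hyp X)) :=
    {μ | v ≤ (μ : Measure (Hyp X)) {h | Consistent h S.1}}
  have hK (S : Vm H m) : IsClosed (K S) := isClosed_le continuous_const
    (ProbabilityMeasure.continuous_apply_of_isClopen (isClopen_setOf_consistent _))
  obtain ⟨μ₀, -, hμ₀⟩ := isCompact_univ.inter_iInter_nonempty K hK fun u => by
    obtain ⟨μ, hμ⟩ := exists_probabilityMeasure_forall_le hv (Subtype.val : u → Vm H m)
    exact ⟨μ, Set.mem_univ _, Set.mem_iInter₂.2 fun S hS => hμ ⟨S, hS⟩⟩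
  obtain ⟨μ, hμ, heq⟩ := exists_isRegularHypMeasure_eq_on_isClopen (μ₀ : Measure (Hyp X))
  refine ⟨μ, hμ, fun S => ?_⟩
  rw [heq _ (isClopen_setOf_consistent _)]
  exact Set.mem_iInter.1 hμ₀ S

theorem strong_duality_general (H : Set (X → Bool)) (m : ℕ) :
    (⨅ (ν : Vm H m → ℝ≥0∞) (_ : IsFinsuppDataDist H m ν),
        ⨆ (μ : Measure (Hyp X)) (_ : IsRegularHypMeasure μ), pay H m μ ν) =
      (⨆ (μ : Measure (Hyp X)) (_ : IsRegularHypMeasure μ),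
        ⨅ (ν : Vm H m → ℝ≥0∞) (_ : IsFinsuppDataDist H m ν), pay H m μ ν) ∧
    ((2 : ℝ≥0∞) ^ m)⁻¹ ≤
      (⨆ (μ : Measure (Hyp X)) (_ : IsRegularHypMeasure μ),
        ⨅ (ν : Vm H m → ℝ≥0∞) (_ : IsFinsuppDataDist H m ν), pay H m μ ν) ∧
    ∃ μ : Measure (Hyp X), IsRegularHypMeasure μ ∧
      (⨅ (ν : Vm H m → ℝ≥0∞) (_ : IsFinsuppDataDist H m ν), pay H m μ ν) =
        (⨆ (μ' : Measure (Hyp X)) (_ : IsRegularHypMeasure μ'),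
          ⨅ (ν : Vm H m → ℝ≥0∞) (_ : IsFinsuppDataDist H m ν), pay H m μ' ν) := by
  set infSup := ⨅ (ν : Vm H m → ℝ≥0∞) (_ : IsFinsuppDataDist H m ν),
    ⨆ (μ : Measure (Hyp X)) (_ : IsRegularHypMeasure μ), pay H m μ ν
  set supInf := ⨆ (μ : Measure (Hyp X)) (_ : IsRegularHypMeasure μ),
    ⨅ (ν : Vm H m → ℝ≥0∞) (_ : IsFinsuppDataDist H m ν), pay H m μ ν
  have hpure (ν : Vm H m → ℝ≥0∞) (hν : IsFinsuppDataDist H m ν) :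
      infSup ≤ ⨆ h, pay H m (Measure.dirac h) ν :=
    (iInf₂_le ν hν).trans_eq (iSup_regular_pay_eq hν.1)
  obtain ⟨μ, hμ, hμS⟩ := exists_isRegularHypMeasure_forall_le hpure
  have hle_μ : infSup ≤ ⨅ (ν : Vm H m → ℝ≥0∞) (_ : IsFinsuppDataDist H m ν), pay H m μ ν :=
    le_iInf₂ fun ν hν => le_pay_of_forall_le hν.2 fun S _ => hμS S
  have hμ_le : (⨅ (ν : Vm H m → ℝ≥0∞) (_ : IsFinsuppDataDist H m ν), pay H m μ ν) ≤ supInf :=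
    le_iSup₂ (f := fun μ (_ : IsRegularHypMeasure μ) =>
      ⨅ (ν : Vm H m → ℝ≥0∞) (_ : IsFinsuppDataDist H m ν), pay H m μ ν) μ hμ
  have hweak : supInf ≤ infSup := iSup₂_iInf₂_le_iInf₂_iSup₂ _ _ _
  have hbound : ((2 : ℝ≥0∞) ^ m)⁻¹ ≤ infSup := le_iInf₂ fun ν hν =>
    (inv_two_pow_le_iSup_pay_dirac hν).trans_eq (iSup_regular_pay_eq hν.1).symm
  exact ⟨le_antisymm (hle_μ.trans hμ_le) hweak, hbound.trans (hle_μ.trans hμ_le),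
    μ, hμ, le_antisymm hμ_le (hweak.trans hle_μ)⟩

/-- (Strong duality in the contradiction graph.) For an arbitrary domain `X`,
`1/ω*_m := inf_ν sup_μ E[1[h consistent with S]]` and
`1/χ*_m := sup_μ inf_ν E[1[h consistent with S]]` (over regular Borel probability measures `μ`
on `{0,1}^X` and finitely supported distributions `ν` on `V_m(H)`) coincide, i.e.
`ω*_m = χ*_m`; moreover `χ*_m ≤ 2^m`, i.e. `1/χ*_m ≥ 2^{−m}`; and the supremum defining
`1/χ*_m` is attained by some `μ*`. -/
theorem strong_duality (H : Set (X → Bool)) (hH : H.Nonempty) (m : ℕ) :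
    (⨅ (ν : Vm H m → ℝ≥0∞) (_ : IsFinsuppDataDist H m ν),
        ⨆ (μ : Measure (Hyp X)) (_ : IsRegularHypMeasure μ), pay H m μ ν) =
      (⨆ (μ : Measure (Hyp X)) (_ : IsRegularHypMeasure μ),
        ⨅ (ν : Vm H m → ℝ≥0∞) (_ : IsFinsuppDataDist H m ν), pay H m μ ν) ∧
    ((2 : ℝ≥0∞) ^ m)⁻¹ ≤
      (⨆ (μ : Measure (Hyp X)) (_ : IsRegularHypMeasure μ),
        ⨅ (ν : Vm H m → ℝ≥0∞) (_ : IsFinsuppDataDist H m ν), pay H m μ ν) ∧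
    ∃ μ : Measure (Hyp X), IsRegularHypMeasure μ ∧
      (⨅ (ν : Vm H m → ℝ≥0∞) (_ : IsFinsuppDataDist H m ν), pay H m μ ν) =
        (⨆ (μ' : Measure (Hyp X)) (_ : IsRegularHypMeasure μ'),
          ⨅ (ν : Vm H m → ℝ≥0∞) (_ : IsFinsuppDataDist H m ν), pay H m μ' ν) :=
  strong_duality_general H m

end ContradictionGraph
end
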